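/- For every complex number q and every n ≥ 1, Σ_{k=0}^{n} [n choose k]_q · B_{n−k}(x|q) · H_k(x|q) = 0, as an identity of polynomials in x. -/

import Mathlib

open Polynomial Finset

/-!
Write `S_n(f, g) = ∑_{i+j=n} [n choose j]_q f_i g_j`. The second `q`-Pascal rule
`[n+1 choose j+1]_q = q^{n-j} [n choose j]_q + [n choose j+1]_q` gives the Leibniz-type rule
`S_{n+1}(f, g) = S_n(q^i f_i, g_{j+1}) + S_n(f_{i+1}, g_j)`, and the absorption identities
`[n+1 choose j+1]_q [j+1]_q = [n+1]_q [n choose j]_q = [n+1 choose j]_q [n+1-j]_q` show that the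
operator `f_i ↦ [i]_q f_{i-1}` can be moved from one factor of `S` to the other.
With `F_i = q^i B_i` the two recurrences read `B_{i+1} = -x F_i + [i]_q F_{i-1}` and
`H_{j+1} = x H_j - [j]_q H_{j-1}`; inserted into the Leibniz rule for `S_{n+1}(B, H)`, the terms
with a factor `x` cancel and the two remaining ones are such a moved pair.
-/

noncomputable section

/-- The `q`-integer `[n]_q = 1 + q + ⋯ + q^{n-1}`. -/
def qInt (q : ℂ) (n : ℕ) : ℂ := ∑ i ∈ Finset.range n, q ^ i

/-- The Gaussian (`q`-)binomial coefficient `[n choose k]_q`, defined via the `q`-Pascal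
rule; it is a polynomial in `q` and agrees with `[n]_q!/([k]_q![n-k]_q!)` whenever the
latter quotient is well defined. -/
def qBinom (q : ℂ) : ℕ → ℕ → ℂ
  | _, 0 => 1
  | 0, _ + 1 => 0
  | n + 1, k + 1 => qBinom q n k + q ^ (k + 1) * qBinom q n (k + 1)

/-- The (renormalized) continuous `q`-Hermite polynomials:
`H_{-1} = 0`, `H_0 = 1`, `H_{n+1}(x) = x H_n(x) - [n]_q H_{n-1}(x)`. -/
def qHermite (q : ℂ) : ℕ → Polynomial ℂ
  | 0 => 1
  | 1 => X
  | n + 2 => X * qHermite q (n + 1) - C (qInt q (n + 1)) * qHermite q n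

/-- The polynomials `B_n(x|q)`:
`B_{-1} = 0`, `B_0 = 1`, `B_{n+1}(x) = -q^n x B_n(x) + q^{n-1} [n]_q B_{n-1}(x)`. -/
def Bpoly (q : ℂ) : ℕ → Polynomial ℂ
  | 0 => 1
  | 1 => -X
  | n + 2 => -(C (q ^ (n + 1)) * X) * Bpoly q (n + 1) + C (q ^ n * qInt q (n + 1)) * Bpoly q n

lemma qInt_zero (q : ℂ) : qInt q 0 = 0 := by simp [qInt]

lemma qInt_succ (q : ℂ) (n : ℕ) : qInt q (n + 1) = qInt q n + q ^ n := by
  simp [qInt, sum_range_succ]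

lemma qInt_succ' (q : ℂ) (n : ℕ) : qInt q (n + 1) = 1 + q * qInt q n := by
  simp [qInt, sum_range_succ', mul_sum, pow_succ', add_comm]

lemma qInt_add (q : ℂ) (m n : ℕ) : qInt q (m + n) = qInt q m + q ^ m * qInt q n := by
  simp [qInt, sum_range_add, pow_add, mul_sum]

lemma qInt_mul_one_sub (q : ℂ) (n : ℕ) : qInt q n * (1 - q) = 1 - q ^ n :=
  geom_sum_mul_neg q n

lemma qBinom_zero_right (q : ℂ) (n : ℕ) : qBinom q n 0 = 1 := by cases n <;> rfl

lemma qBinom_succ_succ (q : ℂ) (n k : ℕ) :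
    qBinom q (n + 1) (k + 1) = qBinom q n k + q ^ (k + 1) * qBinom q n (k + 1) := rfl

lemma qBinom_eq_zero_of_lt (q : ℂ) : ∀ {n k : ℕ}, n < k → qBinom q n k = 0
  | 0, _ + 1, _ => rfl
  | n + 1, k + 1, h => by
    rw [qBinom_succ_succ, qBinom_eq_zero_of_lt q (by omega), qBinom_eq_zero_of_lt q (by omega)]
    ring

lemma qBinom_one_right (q : ℂ) (n : ℕ) : qBinom q n 1 = qInt q n := by
  induction n with
  | zero => simp [qBinom, qInt_zero]
  | succ n ih => rw [qBinom_succ_succ, qBinom_zero_right, zero_add, ih, qInt_succ', pow_one]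

lemma qBinom_succ_right_eq (q : ℂ) :
    ∀ i j : ℕ, qBinom q (i + j) (j + 1) * qInt q (j + 1) = qBinom q (i + j) j * qInt q i
  | i, 0 => by simp [qBinom_one_right, qBinom_zero_right, qInt_succ, qInt_zero]
  | 0, j + 1 => by simp [qBinom_eq_zero_of_lt, qInt_zero]
  | i + 1, j + 1 => by
    have h₁ := qBinom_succ_right_eq q (i + 1) j
    have h₂ := qBinom_succ_right_eq q i (j + 1)
    rw [show i + 1 + j = i + j + 1 by ring] at h₁
    rw [show i + (j + 1) = i + j + 1 by ring] at h₂
    rw [show i + 1 + (j + 1) = i + j + 1 + 1 by ring, qBinom_succ_succ q (i + j + 1) (j + 1),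
      qBinom_succ_succ q (i + j + 1) j]
    linear_combination h₁ + q ^ (j + 2) * h₂ + qBinom q (i + j + 1) (j + 1) *
      (qInt_succ q (j + 1) - q ^ (j + 1) * qInt_succ' q i)

lemma qInt_succ_mul_qBinom_eq (q : ℂ) (n k : ℕ) :
    qInt q (n + 1) * qBinom q n k = qBinom q (n + 1) (k + 1) * qInt q (k + 1) := by
  rcases lt_or_ge n k with h | h
  · rw [qBinom_eq_zero_of_lt q h, qBinom_eq_zero_of_lt q (by omega : n + 1 < k + 1)]
    ring
  · obtain ⟨i, rfl⟩ := Nat.exists_eq_add_of_le' h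
    have hadd : qInt q (i + k + 1) = qInt q (k + 1) + q ^ (k + 1) * qInt q i := by
      rw [show i + k + 1 = k + 1 + i by omega, qInt_add]
    rw [qBinom_succ_succ]
    linear_combination -q ^ (k + 1) * qBinom_succ_right_eq q i k + qBinom q (i + k) k * hadd

lemma qBinom_mul_qInt_succ_eq (q : ℂ) (i j : ℕ) :
    qBinom q (i + j) j * qInt q (i + j + 1) = qBinom q (i + j + 1) j * qInt q (i + 1) := by
  have h := qBinom_succ_right_eq q (i + 1) j
  rw [show i + 1 + j = i + j + 1 by omega] at h
  linear_combination qInt_succ_mul_qBinom_eq q (i + j) j + h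

lemma qBinom_succ_succ' (q : ℂ) (i j : ℕ) :
    qBinom q (i + j + 1) (j + 1) = q ^ i * qBinom q (i + j) j + qBinom q (i + j) (j + 1) := by
  rw [qBinom_succ_succ]
  linear_combination (q - 1) * qBinom_succ_right_eq q i j - qBinom q (i + j) j * qInt_mul_one_sub q i
    + qBinom q (i + j) (j + 1) * qInt_mul_one_sub q (j + 1)

section qBinomConv

variable {A : Type*} [CommRing A] [Algebra ℂ A]

def qBinomConv (q : ℂ) (f g : ℕ → A) (n : ℕ) : A :=
  ∑ p ∈ antidiagonal n, algebraMap ℂ A (qBinom q n p.2) * f p.1 * g p.2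

lemma qBinomConv_succ (q : ℂ) (f g : ℕ → A) (n : ℕ) :
    qBinomConv q f g (n + 1) =
      qBinomConv q (fun i => algebraMap ℂ A (q ^ i) * f i) (fun j => g (j + 1)) n +
        qBinomConv q (fun i => f (i + 1)) g n := by
  have hpascal : ∑ p ∈ antidiagonal n,
      algebraMap ℂ A (qBinom q (n + 1) (p.2 + 1)) * f p.1 * g (p.2 + 1) =
        qBinomConv q (fun i => algebraMap ℂ A (q ^ i) * f i) (fun j => g (j + 1)) n +
          ∑ p ∈ antidiagonal n, algebraMap ℂ A (qBinom q n (p.2 + 1)) * f p.1 * g (p.2 + 1) := by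
    rw [qBinomConv, ← sum_add_distrib]
    refine sum_congr rfl fun ⟨i, j⟩ hij => ?_
    rw [HasAntidiagonal.mem_antidiagonal] at hij
    subst hij
    simp only [qBinom_succ_succ', map_add, map_mul]
    ring
  have hshift : f (n + 1) * g 0 + ∑ p ∈ antidiagonal n,
      algebraMap ℂ A (qBinom q n (p.2 + 1)) * f p.1 * g (p.2 + 1) =
        qBinomConv q (fun i => f (i + 1)) g n := by
    -- split `∑_{i+j=n+1} [n choose j]_q f_i g_j` at `j = 0`, resp. at `i = 0`
    have hj := Nat.sum_antidiagonal_succ' (n := n) (f := fun p : ℕ × ℕ =>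
      algebraMap ℂ A (qBinom q n p.2) * f p.1 * g p.2)
    have hi := Nat.sum_antidiagonal_succ (n := n) (f := fun p : ℕ × ℕ =>
      algebraMap ℂ A (qBinom q n p.2) * f p.1 * g p.2)
    simp only [qBinom_zero_right, qBinom_eq_zero_of_lt q n.lt_succ_self, map_zero, map_one,
      zero_mul, zero_add, one_mul] at hj hi
    rw [← hj, hi]
    rfl
  rw [qBinomConv, Nat.sum_antidiagonal_succ', hpascal, qBinom_zero_right, map_one, one_mul,
    add_left_comm, hshift]

-- The junk value `f (0 - 1) = f 0` is harmless: it comes with the factor `[0]_q = 0`.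
lemma qBinomConv_qInt_mul_left_succ (q : ℂ) (f g : ℕ → A) (n : ℕ) :
    qBinomConv q (fun i => algebraMap ℂ A (qInt q i) * f (i - 1)) g (n + 1) =
      algebraMap ℂ A (qInt q (n + 1)) * qBinomConv q f g n := by
  rw [qBinomConv, Nat.sum_antidiagonal_succ, qBinomConv, mul_sum]
  simp only [qInt_zero, map_zero, zero_mul, mul_zero, zero_add, add_tsub_cancel_right]
  refine sum_congr rfl fun ⟨i, j⟩ hij => ?_
  rw [HasAntidiagonal.mem_antidiagonal] at hij
  subst hij
  have h := congrArg (algebraMap ℂ A) (qBinom_mul_qInt_succ_eq q i j)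
  simp only [map_mul] at h
  linear_combination (f i * g j) * h.symm

lemma qBinomConv_qInt_mul_right_succ (q : ℂ) (f g : ℕ → A) (n : ℕ) :
    qBinomConv q f (fun j => algebraMap ℂ A (qInt q j) * g (j - 1)) (n + 1) =
      algebraMap ℂ A (qInt q (n + 1)) * qBinomConv q f g n := by
  rw [qBinomConv, Nat.sum_antidiagonal_succ', qBinomConv, mul_sum]
  simp only [qInt_zero, map_zero, zero_mul, mul_zero, zero_add, add_tsub_cancel_right]
  refine sum_congr rfl fun ⟨i, j⟩ hij => ?_
  rw [HasAntidiagonal.mem_antidiagonal] at hij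
  subst hij
  have h := congrArg (algebraMap ℂ A) (qInt_succ_mul_qBinom_eq q (i + j) j)
  simp only [map_mul] at h
  linear_combination (f i * g j) * h.symm

lemma qBinomConv_qInt_mul_left_eq_right (q : ℂ) (f g : ℕ → A) (n : ℕ) :
    qBinomConv q (fun i => algebraMap ℂ A (qInt q i) * f (i - 1)) g n =
      qBinomConv q f (fun j => algebraMap ℂ A (qInt q j) * g (j - 1)) n := by
  cases n with
  | zero => simp [qBinomConv, qInt_zero]
  | succ n => rw [qBinomConv_qInt_mul_left_succ, qBinomConv_qInt_mul_right_succ]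

end qBinomConv

lemma qHermite_succ (q : ℂ) (k : ℕ) :
    qHermite q (k + 1) = X * qHermite q k - C (qInt q k) * qHermite q (k - 1) := by
  cases k with
  | zero => simp [qHermite, qInt_zero]
  | succ k => rfl

lemma Bpoly_succ (q : ℂ) (j : ℕ) :
    Bpoly q (j + 1) =
      -(C (q ^ j) * X) * Bpoly q j + C (q ^ (j - 1) * qInt q j) * Bpoly q (j - 1) := by
  cases j with
  | zero => simp [Bpoly, qInt_zero]
  | succ j => rfl

lemma qBinomConv_Bpoly_qHermite_succ (q : ℂ) (n : ℕ) :
    qBinomConv q (Bpoly q) (qHermite q) (n + 1) = 0 := by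
  set F : ℕ → ℂ[X] := fun i => C (q ^ i) * Bpoly q i
  have hsucc : qBinomConv q (Bpoly q) (qHermite q) (n + 1) =
      qBinomConv q (fun i => algebraMap ℂ ℂ[X] (qInt q i) * F (i - 1)) (qHermite q) n -
        qBinomConv q F (fun j => algebraMap ℂ ℂ[X] (qInt q j) * qHermite q (j - 1)) n := by
    rw [qBinomConv_succ]
    simp only [qBinomConv, ← sum_add_distrib, ← sum_sub_distrib, algebraMap_eq, F]
    refine sum_congr rfl fun p _ => ?_
    rw [qHermite_succ, Bpoly_succ]
    simp only [map_mul]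
    ring
  rw [hsucc, qBinomConv_qInt_mul_left_eq_right, sub_self]

lemma sum_qBinom_mul_mul_eq_qBinomConv (q : ℂ) (f g : ℕ → ℂ[X]) (n : ℕ) :
    ∑ k ∈ range (n + 1), C (qBinom q n k) * f (n - k) * g k = qBinomConv q f g n := by
  rw [qBinomConv, ← Nat.sum_antidiagonal_swap, Nat.sum_antidiagonal_eq_sum_range_succ_mk]
  simp [algebraMap_eq]

/-- Identity (10): for every `q ∈ ℂ` and every `n ≥ 1`,
`Σ_{k=0}^n [n choose k]_q B_{n-k}(x|q) H_k(x|q) = 0`, as an identity of polynomials in `x`. -/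
theorem sum_qBinom_B_mul_qHermite_eq_zero (q : ℂ) (n : ℕ) (hn : 1 ≤ n) :
    ∑ k ∈ Finset.range (n + 1), C (qBinom q n k) * Bpoly q (n - k) * qHermite q k = 0 := by
  obtain ⟨m, rfl⟩ := Nat.exists_eq_add_of_le' hn
  rw [sum_qBinom_mul_mul_eq_qBinomConv]
  exact qBinomConv_Bpoly_qHermite_succ q m
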